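/- Let a ∈ (0,1] and μ ∈ (0,1). Set x₀ = (−a−√(a²+4μ(1−μ)))/(2(1−μ)), γ₀ = (−a+√(a²+4μ(1−μ)))/(2(1−μ)), and define φ₀ᴿ(x) = (1−μ)·log|1−ax| − μ·log|x+a| + μ·log|x| for x ∈ ℝ \ {−a, 0, 1/a}. Then: (i) x₀ < −a and 0 < γ₀ < 1/a, and x₀ and γ₀ are exactly the critical points of φ₀ᴿ (equivalently, they are exactly the real roots of (1−μ)x² + ax − μ = 0); (ii) φ₀ᴿ″(x₀) > 0 and φ₀ᴿ(x₀) > 0; (iii) the set {x ∈ ℝ \ {x₀, −a, 0, 1/a} : φ₀ᴿ(x) = φ₀ᴿ(x₀)} has exactly two elements, one lying in (−a, 0) and one lying in (1/a, +∞). -/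

import Mathlib

open Real Set MeasureTheory Filter

noncomputable section

/-- A domino: lower-left corner `(x, y)` and orientation
(`vertical = true` means a `1 × 2` rectangle). -/
structure Domino where
  x : ℤ
  y : ℤ
  vertical : Bool
deriving DecidableEq

/-- The closed planar region covered by a domino. -/
def Domino.region (d : Domino) : Set (ℝ × ℝ) :=
  if d.vertical then Set.Icc (d.x : ℝ) ((d.x : ℝ) + 1) ×ˢ Set.Icc (d.y : ℝ) ((d.y : ℝ) + 2)
  else Set.Icc (d.x : ℝ) ((d.x : ℝ) + 2) ×ˢ Set.Icc (d.y : ℝ) ((d.y : ℝ) + 1)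

/-- `T` is a domino tiling of the region `R`: the dominoes cover exactly `R`
and have pairwise disjoint interiors. -/
def IsTiling (R : Set (ℝ × ℝ)) (T : Finset Domino) : Prop :=
  (⋃ d ∈ T, d.region) = R ∧
    ∀ d ∈ T, ∀ d' ∈ T, d ≠ d' → interior d.region ∩ interior d'.region = ∅

/-- Number of vertical dominoes of a tiling. -/
def vertCount (T : Finset Domino) : ℕ := (T.filter fun d => d.vertical = true).card

/-- The closed unit square with lower-left corner `(i, j)`. -/
def unitSquare (i j : ℤ) : Set (ℝ × ℝ) :=
  Set.Icc (i : ℝ) ((i : ℝ) + 1) ×ˢ Set.Icc (j : ℝ) ((j : ℝ) + 1)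

/-- The Aztec diamond `A_N`. -/
def AztecDiamond (N : ℤ) : Set (ℝ × ℝ) :=
  ⋃₀ {S | ∃ i j : ℤ, S = unitSquare i j ∧
      S ⊆ {p : ℝ × ℝ | |p.1| + |p.2| ≤ (N : ℝ) + 1}}

/-- The L-shaped region `A_N^{m,k}`. -/
def AztecL (N m k : ℤ) : Set (ℝ × ℝ) :=
  ⋃₀ {S | ∃ i j : ℤ, S = unitSquare i j ∧
      S ⊆ {p : ℝ × ℝ | |p.1| + |p.2| ≤ (N : ℝ) + 1 ∧
        p.2 ≤ max (2*(m:ℝ) - 1 - (N:ℝ) - p.1) (p.1 - 2*(m:ℝ) - 1 + (N:ℝ) + 2*(k:ℝ))}}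

/-- The modified region `Ã_N^{m,k}`. -/
def AztecLtilde (N m k : ℤ) : Set (ℝ × ℝ) :=
  if m = N then AztecDiamond N
  else AztecL N (m+1) (k+1) \
      ({(2*(m:ℝ) + (k:ℝ) - (N:ℝ) - 1)} ×ˢ Set.Icc ((k:ℝ) - 1) (k:ℝ))

/-- Weighted count of domino tilings of a region: `Σ_T a^{v(T)}`. -/
def tilingSum (R : Set (ℝ × ℝ)) (a : ℝ) : ℝ :=
  ∑ᶠ T ∈ {T : Finset Domino | IsTiling R T}, a ^ vertCount T

/-- `F_N^{m,k}(a; ε)`. -/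
def Fcnt (N m k : ℤ) (a : ℝ) (ε : ℕ) : ℝ :=
  if ε = 1 then tilingSum (AztecL N m k) a else tilingSum (AztecLtilde N m k) a

/-- `F_N(a)`. -/
def FAztec (N : ℤ) (a : ℝ) : ℝ := tilingSum (AztecDiamond N) a

/-- `κ₂(μ)`. -/
def kappa2 (a μ : ℝ) : ℝ := (a^2*(2*μ - 1) + 2*a*Real.sqrt (μ*(1-μ)))/(1+a^2)

/-- `x₀(μ)`. -/
def x0 (a μ : ℝ) : ℝ := (-a - Real.sqrt (a^2 + 4*μ*(1-μ)))/(2*(1-μ))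

/-- `φ₀` (real form, valid at `x₀ < -a`). -/
def phi0 (a μ x : ℝ) : ℝ := (1-μ)*Real.log (1 - a*x) + μ*Real.log (x/(x+a))

/-- `φ₀''(x₀)`. -/
def phi0'' (a μ : ℝ) : ℝ := iteratedDeriv 2 (phi0 a μ) (x0 a μ)

/-- `x*`. -/
def xstar (a μ : ℝ) : ℝ :=
  (kappa2 a μ + a^2*(2*μ - kappa2 a μ - 1))/(2*a*(1 + kappa2 a μ - μ))

/-- `c*`. -/
def cstar (a μ : ℝ) : ℝ :=
  μ - kappa2 a μ + a^3*(1-μ)/(1/(xstar a μ) - a)^3 - μ/(1 + a/(xstar a μ))^3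

/-- `ζ'(-1)`. -/
def zetaDerivNeg1 : ℝ := (deriv riemannZeta (-1)).re

/-- The defining property of `z₀(κ, μ)`. -/
def z0spec (a κ μ : ℝ) (z : ℂ) : Prop :=
  0 < z.im ∧
  (1-μ)/‖z - 1/(a:ℂ)‖ + (μ-κ)/‖z‖ - μ/‖z + (a:ℂ)‖ = 0 ∧
  κ + 1 - μ - a*μ/‖z + (a:ℂ)‖ - (1-μ)/(a * ‖z - 1/(a:ℂ)‖) = 0

/-- `z₀(κ, μ)`, defined by choice from its defining property. -/
def z0 (a κ μ : ℝ) : ℂ := Classical.epsilon (z0spec a κ μ)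

/-- `G(κ, μ)`. -/
def Gfun (a κ μ : ℝ) : ℝ :=
  let z := z0 a κ μ
  let R := ‖z‖
  let X := z.re
  let Y := z.im
  let A1 := ‖z + (a:ℂ)‖
  let A2 := ‖z - 1/(a:ℂ)‖
  (μ-κ)/2 * (Real.log (4*R^2/(Y*(R+X))) - (X/R)*Real.log ((R+X)/Y))
  - (1-μ)/2 * (Real.log ((R*A2 + X/a - R^2)/((Y/2)*(A2 + 1/a - X)))
      + ((X - 1/a)/A2)*Real.log ((R+X)/Y))
  - μ/2 * (Real.log ((R*A1 + R^2 + a*X)/((Y/2)*(A1 + a + X)))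
      - ((X+a)/A1)*Real.log ((R+X)/Y))

/-- `H(κ, μ)`. -/
def Hfun (a : ℝ) (ε : ℕ) (κ μ : ℝ) : ℝ :=
  let z := z0 a κ μ
  let R := ‖z‖
  let X := z.re
  let Y := z.im
  let A2 := ‖z - 1/(a:ℂ)‖
  (ε:ℝ)/2 * Real.log ((a*Y^2/(2*(A2 + X - 1/a))) * ((R + A2 - 1/a)/(R + 1/a - A2))
      * ((R+X)/(R-X)))
  + Real.log (2*R/(R+X)) + Real.log (Real.cos (Complex.arg z / 2))

/-- `F(κ, μ)` (the 1/N-order coefficient in the ratio asymptotics). -/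
def Ffun (a : ℝ) (ε : ℕ) (κ μ : ℝ) : ℝ :=
  let z := z0 a κ μ
  let R := ‖z‖
  let Y := z.im
  let A2 := ‖z - 1/(a:ℂ)‖
  let γ : ℝ := (μ-κ)/((1-μ+κ)*R)
  let Q : ℂ → ℂ := fun w => (((κ+1-μ)/2 : ℝ) : ℂ) * (w - (γ:ℂ))/(w*(w+(a:ℂ))*(w-1/(a:ℂ)))
  let e0 : ℂ := -(((Real.sqrt 2 * Real.sqrt Y : ℝ)) : ℂ) * Q z
  let e1 : ℂ := (2/5 : ℂ) * deriv Q z / Q z - Complex.I/(10*(Y:ℂ))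
  let g1 : ℂ := Complex.exp (Complex.I * (Real.pi : ℂ) / 4) *
      (((Real.sqrt 2 * Real.sqrt Y : ℝ)) : ℂ) *
      (1/(z + (R:ℂ)) + (ε:ℂ)/(1/(a:ℂ) - z + (A2:ℂ)))
  let M1 : ℂ := 5/(12*z^2*e0) + (5/8)*e1/(z*e0) - g1^2/(z*e0)
  let t := Real.tan (Complex.arg z / 2)
  (Real.sqrt Y/(2*Real.sqrt 2)) * (t * M1.im - M1.re)
  - ((3/16)/(z*e0)).im/(2*Real.sqrt 2*Real.sqrt Y)
  + t * (((19/48)/(z*e0)).im/(2*Real.sqrt 2*Real.sqrt Y)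
      + (Complex.exp (-(Complex.I * (Real.pi : ℂ) / 4))*g1/(2*z*e0)).im)

/-- `C₂(κ, μ)`. -/
def C2fun (a κ μ : ℝ) : ℝ :=
  (1/2 - μ + μ^2)*Real.log (1+a^2) + ∫ κ' in (0:ℝ)..κ, Gfun a κ' μ

/-- `C₁(κ, μ)`. -/
def C1fun (a : ℝ) (ε : ℕ) (κ μ : ℝ) : ℝ :=
  (∫ κ' in (0:ℝ)..κ, Hfun a ε κ' μ) - phi0 a μ (x0 a μ)/2 + (1/2 - (ε:ℝ)*μ)*Real.log (1+a^2)

/-- `C₀(κ, μ)`. -/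
def C0fun (a : ℝ) (ε : ℕ) (κ μ : ℝ) : ℝ :=
  (∫ κ' in (0:ℝ)..κ, (Ffun a ε κ' μ - 1/(12*κ'))) + (1/12)*Real.log κ
  - (1/24)*deriv (fun s => Gfun a s μ) κ
  - (1/6)*Real.log (|x0 a μ|^2 * phi0'' a μ)
  - (ε:ℝ)/2*Real.log (1 - a*(x0 a μ)) + zetaDerivNeg1

end

set_option maxHeartbeats 2000000 in
/-- critical points and level structure of
`φ₀ᴿ(x) = (1−μ)log|1−ax| − μ log|x+a| + μ log|x|`. -/
theorem phi0_real_critical_points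
    (a : ℝ) (ha : 0 < a) (ha1 : a ≤ 1) (μ : ℝ) (hμ : 0 < μ) (hμ1 : μ < 1) :
    let x₀ := (-a - Real.sqrt (a^2 + 4*μ*(1-μ)))/(2*(1-μ))
    let γ₀ := (-a + Real.sqrt (a^2 + 4*μ*(1-μ)))/(2*(1-μ))
    let f : ℝ → ℝ := fun x =>
      (1-μ)*Real.log |1 - a*x| - μ*Real.log |x + a| + μ*Real.log |x|
    (x₀ < -a ∧ 0 < γ₀ ∧ γ₀ < 1/a) ∧
    (∀ x : ℝ, x ≠ -a → x ≠ 0 → x ≠ 1/a → (deriv f x = 0 ↔ x = x₀ ∨ x = γ₀)) ∧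
    (∀ x : ℝ, (1-μ)*x^2 + a*x - μ = 0 ↔ x = x₀ ∨ x = γ₀) ∧
    0 < iteratedDeriv 2 f x₀ ∧ 0 < f x₀ ∧
    (∃ p q : ℝ, p ∈ Set.Ioo (-a) (0:ℝ) ∧ q ∈ Set.Ioi (1/a) ∧
      {x : ℝ | x ≠ x₀ ∧ x ≠ -a ∧ x ≠ 0 ∧ x ≠ 1/a ∧ f x = f x₀} = {p, q}) := by
  intro x₀ γ₀ f
  have h1μ : (0:ℝ) < 1 - μ := by linarith
  have hsnn : (0:ℝ) ≤ a^2 + 4*μ*(1-μ) := by nlinarith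
  have hs2 : Real.sqrt (a^2 + 4*μ*(1-μ)) ^ 2 = a^2 + 4*μ*(1-μ) := Real.sq_sqrt hsnn
  have hspos : 0 < Real.sqrt (a^2 + 4*μ*(1-μ)) := Real.sqrt_pos.mpr (by nlinarith)
  have hx0 : x₀ = (-a - Real.sqrt (a^2 + 4*μ*(1-μ)))/(2*(1-μ)) := rfl
  have hγ0 : γ₀ = (-a + Real.sqrt (a^2 + 4*μ*(1-μ)))/(2*(1-μ)) := rfl
  -- sum and product of roots
  have h1 : (1-μ)*(x₀+γ₀) = -a := by
    rw [hx0, hγ0]; field_simp; ring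
  have h2 : (1-μ)*(x₀*γ₀) = -μ := by
    rw [hx0, hγ0]; field_simp
    have hs2' : Real.sqrt (a^2 + μ*(1-μ)*4) ^ 2 = a^2 + μ*(1-μ)*4 := Real.sq_sqrt (by nlinarith)
    nlinarith [hs2']
  have hfact : ∀ x : ℝ, (1-μ)*x^2 + a*x - μ = (1-μ)*(x-x₀)*(x-γ₀) := by
    intro x
    have e : (1-μ)*(x-x₀)*(x-γ₀)
        = (1-μ)*x^2 - ((1-μ)*(x₀+γ₀))*x + (1-μ)*(x₀*γ₀) := by ring
    rw [e, h1, h2]; ring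
  have hx0le : x₀ ≤ γ₀ := by
    rw [hx0, hγ0]
    exact (div_le_div_iff_of_pos_right (by linarith)).mpr (by linarith)
  have hx0lt : x₀ < γ₀ := by
    rw [hx0, hγ0]
    exact (div_lt_div_iff_of_pos_right (by linarith)).mpr (by linarith)
  have hx0a : x₀ < -a := by
    by_contra hcon
    push_neg at hcon
    have h := hfact (-a)
    nlinarith [mul_nonneg (by linarith : (0:ℝ) ≤ x₀ + a) (by linarith : (0:ℝ) ≤ γ₀ + a)]
  have hγ0pos : 0 < γ₀ := by
    by_contra hcon
    push_neg at hcon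
    have h := hfact 0
    nlinarith [mul_nonneg (by linarith : (0:ℝ) ≤ 0 - γ₀) (by linarith : (0:ℝ) ≤ 0 - x₀)]
  have hx0neg : x₀ < 0 := by linarith
  have ha' : 0 < 1/a := by positivity
  have hγ0a : γ₀ < 1/a := by
    by_contra hcon
    push_neg at hcon
    have h := hfact (1/a)
    have h1a : a * (1/a) = 1 := by field_simp
    have hL : 0 < (1-μ)*(1/a)^2 + a*(1/a) - μ := by
      have : 0 < (1-μ)*(1/a)^2 := by positivity
      rw [h1a]; linarith
    nlinarith [mul_nonneg (by linarith : (0:ℝ) ≤ γ₀ - 1/a) (by linarith : (0:ℝ) ≤ 1/a - x₀)]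
  -- rewrite f without absolute values
  have hfeq : ∀ x : ℝ, f x = (1-μ)*Real.log (1-a*x) - μ*Real.log (x+a) + μ*Real.log x := by
    intro x
    show (1-μ)*Real.log |1-a*x| - μ*Real.log |x+a| + μ*Real.log |x| = _
    rw [Real.log_abs, Real.log_abs, Real.log_abs]
  have hfun : f = fun x => (1-μ)*Real.log (1-a*x) - μ*Real.log (x+a) + μ*Real.log x :=
    funext hfeq
  -- the derivative
  have hder : ∀ x : ℝ, x ≠ 0 → x + a ≠ 0 → 1 - a*x ≠ 0 →
      HasDerivAt f ((-a)*((1-μ)*(x-x₀)*(x-γ₀))/(x*(x+a)*(1-a*x))) x := by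
    intro x hx hxa hax
    have h1' : HasDerivAt (fun y : ℝ => 1 - a*y) (-a) x := by
      simpa using ((hasDerivAt_id x).const_mul a).const_sub 1
    have h2' : HasDerivAt (fun y : ℝ => y + a) 1 x := by
      simpa using (hasDerivAt_id x).add_const a
    have H : HasDerivAt (fun y => (1-μ)*Real.log (1-a*y) - μ*Real.log (y+a) + μ*Real.log y)
        ((1-μ)*((-a)/(1-a*x)) - μ*(1/(x+a)) + μ*x⁻¹) x :=
      (((h1'.log hax).const_mul (1-μ)).sub ((h2'.log hxa).const_mul μ)).add
        ((Real.hasDerivAt_log hx).const_mul μ)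
    rw [hfun]
    convert H using 1
    rw [← hfact x]
    field_simp
    ring
  have hdne : ∀ x : ℝ, x ≠ 0 → x + a ≠ 0 → 1 - a*x ≠ 0 →
      deriv f x = (-a)*((1-μ)*(x-x₀)*(x-γ₀))/(x*(x+a)*(1-a*x)) :=
    fun x h1 h2 h3 => (hder x h1 h2 h3).deriv
  have hcont : ∀ x : ℝ, x ≠ 0 → x + a ≠ 0 → 1 - a*x ≠ 0 → ContinuousAt f x :=
    fun x h1 h2 h3 => (hder x h1 h2 h3).continuousAt
  -- region condition helpers
  have hax_neg : ∀ x : ℝ, x < 0 → 0 < 1 - a*x := by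
    intro x hx
    nlinarith [mul_pos ha (show 0 < -x by linarith)]
  have hax_mid : ∀ x : ℝ, x < 1/a → 0 < 1 - a*x := by
    intro x hx
    rcases le_or_gt x 0 with h | h
    · rcases eq_or_lt_of_le h with rfl | h'
      · simpa using one_pos
      · exact hax_neg x h'
    · have : a*x < 1 := by
        have := (lt_div_iff₀ ha).mp (by linarith : x < 1/a)
        linarith [this]
      linarith
  have hax_hi : ∀ x : ℝ, 1/a < x → 1 - a*x < 0 := by
    intro x hx
    have := (div_lt_iff₀ ha).mp hx
    nlinarith
  -- conditions in the four regions
  have hcR1 : ∀ x : ℝ, x < -a → x ≠ 0 ∧ x + a ≠ 0 ∧ 1 - a*x ≠ 0 := by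
    intro x hx
    exact ⟨by linarith, by linarith, ne_of_gt (hax_neg x (by linarith))⟩
  have hcR2 : ∀ x : ℝ, -a < x → x < 0 → x ≠ 0 ∧ x + a ≠ 0 ∧ 1 - a*x ≠ 0 := by
    intro x hx hx'
    exact ⟨by linarith, by linarith, ne_of_gt (hax_neg x hx')⟩
  have hcR3 : ∀ x : ℝ, 0 < x → x < 1/a → x ≠ 0 ∧ x + a ≠ 0 ∧ 1 - a*x ≠ 0 := by
    intro x hx hx'
    exact ⟨by linarith, by linarith, ne_of_gt (hax_mid x hx')⟩
  have hcR4 : ∀ x : ℝ, 1/a < x → x ≠ 0 ∧ x + a ≠ 0 ∧ 1 - a*x ≠ 0 := by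
    intro x hx
    exact ⟨by linarith, by linarith, ne_of_lt (hax_hi x hx)⟩
  -- derivative signs in the five monotonicity regions
  have hderneg1 : ∀ x : ℝ, x < x₀ → deriv f x < 0 := by
    intro x hx
    obtain ⟨c1, c2, c3⟩ := hcR1 x (by linarith)
    rw [hdne x c1 c2 c3]
    apply div_neg_of_neg_of_pos
    · nlinarith [mul_pos ha (mul_pos h1μ (mul_pos (show (0:ℝ) < x₀ - x by linarith)
        (show (0:ℝ) < γ₀ - x by linarith)))]
    · nlinarith [mul_pos (mul_pos (show (0:ℝ) < -x by linarith)
        (show (0:ℝ) < -(x+a) by linarith)) (hax_neg x (by linarith))]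
  have hderpos2 : ∀ x : ℝ, x₀ < x → x < -a → 0 < deriv f x := by
    intro x hx hx'
    obtain ⟨c1, c2, c3⟩ := hcR1 x hx'
    rw [hdne x c1 c2 c3]
    apply div_pos
    · nlinarith [mul_pos ha (mul_pos h1μ (mul_pos (show (0:ℝ) < x - x₀ by linarith)
        (show (0:ℝ) < γ₀ - x by linarith)))]
    · nlinarith [mul_pos (mul_pos (show (0:ℝ) < -x by linarith)
        (show (0:ℝ) < -(x+a) by linarith)) (hax_neg x (by linarith))]
  have hderneg3 : ∀ x : ℝ, -a < x → x < 0 → deriv f x < 0 := by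
    intro x hx hx'
    obtain ⟨c1, c2, c3⟩ := hcR2 x hx hx'
    rw [hdne x c1 c2 c3]
    apply div_neg_of_pos_of_neg
    · nlinarith [mul_pos ha (mul_pos h1μ (mul_pos (show (0:ℝ) < x - x₀ by linarith)
        (show (0:ℝ) < γ₀ - x by linarith)))]
    · nlinarith [mul_pos (mul_pos (show (0:ℝ) < -x by linarith)
        (show (0:ℝ) < x + a by linarith)) (hax_neg x hx')]
  have hderpos4 : ∀ x : ℝ, 0 < x → x < γ₀ → 0 < deriv f x := by
    intro x hx hx'
    obtain ⟨c1, c2, c3⟩ := hcR3 x hx (by linarith)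
    rw [hdne x c1 c2 c3]
    apply div_pos
    · nlinarith [mul_pos ha (mul_pos h1μ (mul_pos (show (0:ℝ) < x - x₀ by linarith)
        (show (0:ℝ) < γ₀ - x by linarith)))]
    · nlinarith [mul_pos (mul_pos hx (show (0:ℝ) < x + a by linarith))
        (hax_mid x (by linarith))]
  have hderneg5 : ∀ x : ℝ, γ₀ < x → x < 1/a → deriv f x < 0 := by
    intro x hx hx'
    obtain ⟨c1, c2, c3⟩ := hcR3 x (by linarith) hx'
    rw [hdne x c1 c2 c3]
    apply div_neg_of_neg_of_pos
    · nlinarith [mul_pos ha (mul_pos h1μ (mul_pos (show (0:ℝ) < x - x₀ by linarith)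
        (show (0:ℝ) < x - γ₀ by linarith)))]
    · nlinarith [mul_pos (mul_pos (show (0:ℝ) < x by linarith)
        (show (0:ℝ) < x + a by linarith)) (hax_mid x hx')]
  have hderpos6 : ∀ x : ℝ, 1/a < x → 0 < deriv f x := by
    intro x hx
    obtain ⟨c1, c2, c3⟩ := hcR4 x hx
    rw [hdne x c1 c2 c3]
    apply div_pos_of_neg_of_neg
    · nlinarith [mul_pos ha (mul_pos h1μ (mul_pos (show (0:ℝ) < x - x₀ by linarith)
        (show (0:ℝ) < x - γ₀ by linarith)))]
    · nlinarith [mul_pos (mul_pos (show (0:ℝ) < x by linarith)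
        (show (0:ℝ) < x + a by linarith)) (show (0:ℝ) < a*x - 1 by nlinarith [hax_hi x hx])]
  -- monotonicity on the six regions
  have M1 : StrictAntiOn f (Iic x₀) := by
    apply strictAntiOn_of_deriv_neg (convex_Iic x₀)
    · intro x hx
      obtain ⟨c1, c2, c3⟩ := hcR1 x (lt_of_le_of_lt hx hx0a)
      exact (hcont x c1 c2 c3).continuousWithinAt
    · intro x hx
      rw [interior_Iic] at hx
      exact hderneg1 x hx
  have M2 : StrictMonoOn f (Ico x₀ (-a)) := by
    apply strictMonoOn_of_deriv_pos (convex_Ico x₀ (-a))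
    · intro x hx
      obtain ⟨c1, c2, c3⟩ := hcR1 x hx.2
      exact (hcont x c1 c2 c3).continuousWithinAt
    · intro x hx
      rw [interior_Ico] at hx
      exact hderpos2 x hx.1 hx.2
  have M3 : StrictAntiOn f (Ioo (-a) 0) := by
    apply strictAntiOn_of_deriv_neg (convex_Ioo (-a) 0)
    · intro x hx
      obtain ⟨c1, c2, c3⟩ := hcR2 x hx.1 hx.2
      exact (hcont x c1 c2 c3).continuousWithinAt
    · intro x hx
      rw [interior_Ioo] at hx
      exact hderneg3 x hx.1 hx.2
  have M4 : StrictMonoOn f (Ioc 0 γ₀) := by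
    apply strictMonoOn_of_deriv_pos (convex_Ioc 0 γ₀)
    · intro x hx
      obtain ⟨c1, c2, c3⟩ := hcR3 x hx.1 (lt_of_le_of_lt hx.2 hγ0a)
      exact (hcont x c1 c2 c3).continuousWithinAt
    · intro x hx
      rw [interior_Ioc] at hx
      exact hderpos4 x hx.1 hx.2
  have M5 : StrictAntiOn f (Ico γ₀ (1/a)) := by
    apply strictAntiOn_of_deriv_neg (convex_Ico γ₀ (1/a))
    · intro x hx
      obtain ⟨c1, c2, c3⟩ := hcR3 x (lt_of_lt_of_le hγ0pos hx.1) hx.2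
      exact (hcont x c1 c2 c3).continuousWithinAt
    · intro x hx
      rw [interior_Ico] at hx
      exact hderneg5 x hx.1 hx.2
  have M6 : StrictMonoOn f (Ioi (1/a)) := by
    apply strictMonoOn_of_deriv_pos (convex_Ioi (1/a))
    · intro x hx
      obtain ⟨c1, c2, c3⟩ := hcR4 x hx
      exact (hcont x c1 c2 c3).continuousWithinAt
    · intro x hx
      rw [interior_Ioi] at hx
      exact hderpos6 x hx
  -- the value at x₀ is positive
  have hfx0pos : 0 < f x₀ := by
    rw [hfeq x₀]
    have hax0 : 1 < 1 - a*x₀ := by nlinarith [mul_pos ha (show (0:ℝ) < -x₀ by linarith)]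
    have l1 : 0 < (1-μ)*Real.log (1-a*x₀) := mul_pos h1μ (Real.log_pos hax0)
    have l2 : Real.log (x₀+a) < Real.log x₀ := by
      rw [← Real.log_neg_eq_log (x₀+a), ← Real.log_neg_eq_log x₀]
      exact Real.log_lt_log (by linarith) (by linarith)
    nlinarith [mul_lt_mul_of_pos_left l2 hμ]
  -- the value at γ₀ is negative
  have hfγneg : f γ₀ < 0 := by
    rw [hfeq γ₀]
    have h₁ : 0 < 1 - a*γ₀ := hax_mid γ₀ hγ0a
    have h₂ : 1 - a*γ₀ < 1 := by nlinarith [mul_pos ha hγ0pos]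
    have l1 : (1-μ)*Real.log (1-a*γ₀) < 0 :=
      mul_neg_of_pos_of_neg h1μ (Real.log_neg h₁ h₂)
    have l2 : Real.log γ₀ < Real.log (γ₀+a) :=
      Real.log_lt_log hγ0pos (by linarith)
    nlinarith [mul_lt_mul_of_pos_left l2 hμ]
  -- second derivative at x₀
  have hsecond : 0 < iteratedDeriv 2 f x₀ := by
    obtain ⟨c1, c2, c3⟩ := hcR1 x₀ hx0a
    have hdenne : x₀*(x₀+a)*(1-a*x₀) ≠ 0 := mul_ne_zero (mul_ne_zero c1 c2) c3
    have hev : deriv f =ᶠ[nhds x₀]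
        (fun x => (-a)*((1-μ)*(x-x₀)*(x-γ₀))/(x*(x+a)*(1-a*x))) := by
      filter_upwards [Iio_mem_nhds hx0a] with x hx
      obtain ⟨d1, d2, d3⟩ := hcR1 x hx
      exact hdne x d1 d2 d3
    have hnum : HasDerivAt (fun x : ℝ => (-a)*((1-μ)*(x-x₀)*(x-γ₀)))
        ((-a)*((1-μ)*1*(x₀-γ₀) + (1-μ)*(x₀-x₀)*1)) x₀ := by
      have hb : HasDerivAt (fun x : ℝ => (1-μ)*(x-x₀)) ((1-μ)*1) x₀ :=
        ((hasDerivAt_id x₀).sub_const x₀).const_mul (1-μ)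
      exact (hb.mul ((hasDerivAt_id x₀).sub_const γ₀)).const_mul (-a)
    have hden : HasDerivAt (fun x : ℝ => x*(x+a)*(1-a*x))
        ((1*(x₀+a) + x₀*1)*(1-a*x₀) + x₀*(x₀+a)*(-a)) x₀ := by
      have hd1 : HasDerivAt (fun x : ℝ => x*(x+a)) (1*(x₀+a) + x₀*1) x₀ :=
        (hasDerivAt_id x₀).mul ((hasDerivAt_id x₀).add_const a)
      have hd2 : HasDerivAt (fun x : ℝ => 1 - a*x) (-a) x₀ := by
        simpa using ((hasDerivAt_id x₀).const_mul a).const_sub 1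
      exact hd1.mul hd2
    have hquot := (hnum.div hden hdenne).deriv
    have h2eq : iteratedDeriv 2 f x₀
        = deriv (fun x => (-a)*((1-μ)*(x-x₀)*(x-γ₀))/(x*(x+a)*(1-a*x))) x₀ := by
      rw [iteratedDeriv_succ, iteratedDeriv_one]
      exact hev.deriv_eq
    rw [h2eq, show deriv (fun x => (-a)*((1-μ)*(x-x₀)*(x-γ₀))/(x*(x+a)*(1-a*x))) x₀ = _ from hquot]
    have hval : ((-a)*((1-μ)*1*(x₀-γ₀) + (1-μ)*(x₀-x₀)*1) * (x₀*(x₀+a)*(1-a*x₀))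
          - (-a)*((1-μ)*(x₀-x₀)*(x₀-γ₀)) * ((1*(x₀+a) + x₀*1)*(1-a*x₀) + x₀*(x₀+a)*(-a)))
          / (x₀*(x₀+a)*(1-a*x₀))^2
        = ((-a)*((1-μ)*(x₀-γ₀))) / (x₀*(x₀+a)*(1-a*x₀)) := by
      rw [div_eq_div_iff (by positivity) hdenne]
      ring
    rw [hval]
    apply div_pos
    · nlinarith [mul_pos ha (mul_pos h1μ (show (0:ℝ) < γ₀ - x₀ by linarith))]
    · nlinarith [mul_pos (mul_pos (show (0:ℝ) < -x₀ by linarith)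
        (show (0:ℝ) < -(x₀+a) by linarith)) (hax_neg x₀ hx0neg)]
  -- limits at the four boundary points
  have hT1 : Tendsto f (nhdsWithin (-a) (Ioi (-a))) atTop := by
    have k1 : ContinuousAt (fun x : ℝ => (1-μ)*Real.log (1-a*x) + μ*Real.log x) (-a) := by
      have i1 : ContinuousAt (fun x : ℝ => Real.log (1-a*x)) (-a) := by
        have h' : ContinuousAt (fun x : ℝ => (1:ℝ)-a*x) (-a) := by fun_prop
        exact h'.log (by show (1:ℝ)-a*(-a) ≠ 0; nlinarith)
      have i2 : ContinuousAt (fun x : ℝ => Real.log x) (-a) :=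
        Real.continuousAt_log (by linarith)
      exact (i1.const_mul _).add (i2.const_mul _)
    have k3 : Tendsto (fun x : ℝ => Real.log (x+a)) (nhdsWithin (-a) (Ioi (-a))) atBot := by
      apply Real.tendsto_log_nhdsNE_zero.comp
      apply tendsto_nhdsWithin_of_tendsto_nhds_of_eventually_within
      · have h0 : Tendsto (fun x : ℝ => x + a) (nhds (-a)) (nhds 0) := by
          have h'' : ContinuousAt (fun x : ℝ => x + a) (-a) := by fun_prop
          simpa using h''.tendsto
        exact h0.mono_left nhdsWithin_le_nhds
      · filter_upwards [self_mem_nhdsWithin] with x hx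
        simpa using (by linarith [mem_Ioi.mp hx] : x + a ≠ 0)
    have k4 : Tendsto (fun x : ℝ => μ * -Real.log (x+a)) (nhdsWithin (-a) (Ioi (-a))) atTop :=
      (tendsto_neg_atBot_atTop.comp k3).const_mul_atTop hμ
    have k5 : Tendsto (fun x : ℝ => ((1-μ)*Real.log (1-a*x) + μ*Real.log x)
        + μ * -Real.log (x+a)) (nhdsWithin (-a) (Ioi (-a))) atTop :=
      Tendsto.add_atTop (k1.continuousWithinAt.tendsto) k4
    rw [hfun]
    exact k5.congr (fun x => by ring)
  have hT2 : Tendsto f (nhdsWithin 0 (Iio 0)) atBot := by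
    have k1 : ContinuousAt (fun x : ℝ => (1-μ)*Real.log (1-a*x) - μ*Real.log (x+a)) 0 := by
      have i1 : ContinuousAt (fun x : ℝ => Real.log (1-a*x)) 0 := by
        have h' : ContinuousAt (fun x : ℝ => (1:ℝ)-a*x) 0 := by fun_prop
        exact h'.log (by show (1:ℝ)-a*0 ≠ 0; norm_num)
      have i2 : ContinuousAt (fun x : ℝ => Real.log (x+a)) 0 := by
        have h' : ContinuousAt (fun x : ℝ => x+a) 0 := by fun_prop
        exact h'.log (by show (0:ℝ)+a ≠ 0; linarith)
      exact (i1.const_mul _).sub (i2.const_mul _)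
    have k2 : Tendsto (fun x : ℝ => μ * Real.log x) (nhdsWithin 0 (Iio 0)) atBot := by
      apply Tendsto.const_mul_atBot hμ
      exact Real.tendsto_log_nhdsNE_zero.mono_left
        (nhdsWithin_mono 0 (fun x hx => by simpa using ne_of_lt hx))
    rw [hfun]
    exact Tendsto.add_atBot (k1.continuousWithinAt.tendsto) k2
  have hT3 : Tendsto f (nhdsWithin (1/a) (Ioi (1/a))) atBot := by
    have k1 : Tendsto (fun x : ℝ => (1-μ)*Real.log (1-a*x))
        (nhdsWithin (1/a) (Ioi (1/a))) atBot := by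
      apply Tendsto.const_mul_atBot h1μ
      apply Real.tendsto_log_nhdsNE_zero.comp
      apply tendsto_nhdsWithin_of_tendsto_nhds_of_eventually_within
      · have h0 : Tendsto (fun x : ℝ => 1 - a*x) (nhds (1/a)) (nhds (1 - a*(1/a))) :=
          (continuous_const.sub (continuous_const.mul continuous_id)).tendsto (1/a)
        have : (1:ℝ) - a*(1/a) = 0 := by field_simp; norm_num
        rw [this] at h0
        exact h0.mono_left nhdsWithin_le_nhds
      · filter_upwards [self_mem_nhdsWithin] with x hx
        simpa using ne_of_lt (hax_hi x (mem_Ioi.mp hx))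
    have k2 : ContinuousAt (fun x : ℝ => μ*Real.log x - μ*Real.log (x+a)) (1/a) := by
      have i1 : ContinuousAt (fun x : ℝ => Real.log x) (1/a) :=
        Real.continuousAt_log (by positivity)
      have i2 : ContinuousAt (fun x : ℝ => Real.log (x+a)) (1/a) := by
        have h' : ContinuousAt (fun x : ℝ => x+a) (1/a) := by fun_prop
        exact h'.log (by show (1/a)+a ≠ 0; positivity)
      exact (i1.const_mul _).sub (i2.const_mul _)
    have k5 : Tendsto (fun x : ℝ => (1-μ)*Real.log (1-a*x)
        + (μ*Real.log x - μ*Real.log (x+a))) (nhdsWithin (1/a) (Ioi (1/a))) atBot :=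
      Tendsto.atBot_add k1 (k2.continuousWithinAt.tendsto)
    rw [hfun]
    exact k5.congr (fun x => by ring)
  have hT4 : Tendsto f atTop atTop := by
    have k1 : Tendsto (fun x : ℝ => (1-μ)*Real.log (1-a*x)) atTop atTop := by
      apply Tendsto.const_mul_atTop h1μ
      have e : ∀ x : ℝ, Real.log (a*x-1) = Real.log (1-a*x) := by
        intro x
        rw [← Real.log_neg_eq_log (a*x-1)]
        ring_nf
      have t1 : Tendsto (fun x : ℝ => a*x - 1) atTop atTop := by
        apply tendsto_atTop_add_const_right
        exact Tendsto.const_mul_atTop ha tendsto_id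
      exact (Real.tendsto_log_atTop.comp t1).congr e
    have k2 : Tendsto (fun x : ℝ => μ*Real.log x - μ*Real.log (x+a)) atTop (nhds 0) := by
      have t2 : Tendsto (fun x : ℝ => 1 + a/x) atTop (nhds 1) := by
        have := Tendsto.div_atTop (tendsto_const_nhds (x := a)) tendsto_id
        simpa using tendsto_const_nhds.add this
      have t3 : Tendsto (fun x : ℝ => -(μ * Real.log (1 + a/x))) atTop (nhds 0) := by
        have l0 : Tendsto (fun x : ℝ => Real.log (1 + a/x)) atTop (nhds 0) := by
          have := (Real.continuousAt_log (show (1:ℝ) ≠ 0 by norm_num)).tendsto.comp t2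
          simpa [Function.comp_def] using this
        have := (l0.const_mul μ).neg
        simpa using this
      apply t3.congr'
      filter_upwards [eventually_gt_atTop (0:ℝ)] with x hx
      have hxne : x ≠ 0 := ne_of_gt hx
      have hxane : x + a ≠ 0 := by positivity
      have e1 : 1 + a/x = (x+a)/x := by field_simp
      rw [e1, Real.log_div hxane hxne]
      ring
    have k5 : Tendsto (fun x : ℝ => (1-μ)*Real.log (1-a*x)
        + (μ*Real.log x - μ*Real.log (x+a))) atTop atTop :=
      Tendsto.atTop_add k1 k2
    rw [hfun]
    exact k5.congr (fun x => by ring)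
  -- existence of p
  have hmemIoo : ∀ᶠ x in nhdsWithin (-a) (Ioi (-a)), x ∈ Ioo (-a) (0:ℝ) :=
    eventually_of_mem (Ioo_mem_nhdsGT_of_mem ⟨le_refl (-a), by linarith⟩) (fun x hx => hx)
  obtain ⟨x₁, hx₁gt, hx₁mem⟩ := ((hT1.eventually_gt_atTop (f x₀)).and hmemIoo).exists
  have hmemIoo2 : ∀ᶠ x in nhdsWithin 0 (Iio 0), x ∈ Ioo x₁ (0:ℝ) :=
    eventually_of_mem (Ioo_mem_nhdsLT_of_mem ⟨hx₁mem.2, le_refl 0⟩) (fun x hx => hx)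
  obtain ⟨x₂, hx₂lt, hx₂mem⟩ := ((hT2.eventually_lt_atBot (f x₀)).and hmemIoo2).exists
  have hx₁x₂ : x₁ ≤ x₂ := le_of_lt hx₂mem.1
  have hcI1 : ContinuousOn f (Icc x₁ x₂) := by
    intro x hx
    obtain ⟨c1, c2, c3⟩ := hcR2 x (lt_of_lt_of_le hx₁mem.1 hx.1) (lt_of_le_of_lt hx.2 hx₂mem.2)
    exact (hcont x c1 c2 c3).continuousWithinAt
  obtain ⟨p, hpIcc, hfp⟩ := intermediate_value_Icc' hx₁x₂ hcI1 ⟨le_of_lt hx₂lt, le_of_lt hx₁gt⟩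
  have hpmem : p ∈ Ioo (-a) (0:ℝ) :=
    ⟨lt_of_lt_of_le hx₁mem.1 hpIcc.1, lt_of_le_of_lt hpIcc.2 hx₂mem.2⟩
  -- existence of q
  have hmemIoi : ∀ᶠ x in nhdsWithin (1/a) (Ioi (1/a)), x ∈ Ioi (1/a) :=
    eventually_mem_nhdsWithin
  obtain ⟨y₁, hy₁lt, hy₁mem⟩ := ((hT3.eventually_lt_atBot (f x₀)).and hmemIoi).exists
  obtain ⟨y₂, hy₂gt, hy₂gt'⟩ := ((hT4.eventually_gt_atTop (f x₀)).and
    (eventually_gt_atTop y₁)).exists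
  have hy₁y₂ : y₁ ≤ y₂ := le_of_lt hy₂gt'
  have hcI2 : ContinuousOn f (Icc y₁ y₂) := by
    intro x hx
    obtain ⟨c1, c2, c3⟩ := hcR4 x (lt_of_lt_of_le hy₁mem hx.1)
    exact (hcont x c1 c2 c3).continuousWithinAt
  obtain ⟨q, hqIcc, hfq⟩ := intermediate_value_Icc hy₁y₂ hcI2 ⟨le_of_lt hy₁lt, le_of_lt hy₂gt⟩
  have hqmem : q ∈ Ioi (1/a) := lt_of_lt_of_le hy₁mem hqIcc.1
  -- characterization of critical points
  have hderiv_iff : ∀ x : ℝ, x ≠ -a → x ≠ 0 → x ≠ 1/a →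
      (deriv f x = 0 ↔ x = x₀ ∨ x = γ₀) := by
    intro x hA hB hC
    have c2 : x + a ≠ 0 := fun h => hA (by linarith)
    have c3 : 1 - a*x ≠ 0 := fun h => hC (by field_simp; linarith)
    rw [hdne x hB c2 c3, div_eq_zero_iff]
    constructor
    · rintro (h | h)
      · rcases mul_eq_zero.mp h with h' | h'
        · exact absurd h' (by intro hh; rw [neg_eq_zero] at hh; exact (ne_of_gt ha) hh)
        · rcases mul_eq_zero.mp h' with h'' | h''
          · rcases mul_eq_zero.mp h'' with h3 | h3
            · exact absurd h3 (by linarith)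
            · exact Or.inl (sub_eq_zero.mp h3)
          · exact Or.inr (sub_eq_zero.mp h'')
      · exact absurd h (mul_ne_zero (mul_ne_zero hB c2) c3)
    · rintro (rfl | rfl)
      · left; ring
      · left; ring
  have hquadIff : ∀ x : ℝ, ((1-μ)*x^2 + a*x - μ = 0 ↔ x = x₀ ∨ x = γ₀) := by
    intro x
    rw [hfact x]
    constructor
    · intro h
      rcases mul_eq_zero.mp h with h' | h'
      · rcases mul_eq_zero.mp h' with h'' | h''
        · exact absurd h'' (by linarith)
        · exact Or.inl (sub_eq_zero.mp h'')
      · exact Or.inr (sub_eq_zero.mp h')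
    · rintro (rfl | rfl) <;> ring
  -- the level set
  have hset : {x : ℝ | x ≠ x₀ ∧ x ≠ -a ∧ x ≠ 0 ∧ x ≠ 1/a ∧ f x = f x₀} = {p, q} := by
    ext x
    simp only [mem_setOf_eq, mem_insert_iff, mem_singleton_iff]
    constructor
    · rintro ⟨hne0, hnea, hne00, hne1a, hfx⟩
      rcases lt_trichotomy x (-a) with hlt | heq | hgt
      · exfalso
        rcases lt_trichotomy x x₀ with h | h | h
        · have := M1 (mem_Iic.mpr h.le) (mem_Iic.mpr le_rfl) h
          linarith
        · exact hne0 h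
        · have := M2 ⟨le_rfl, hx0a⟩ ⟨h.le, hlt⟩ h
          linarith
      · exact absurd heq hnea
      · rcases lt_trichotomy x 0 with h0 | h0 | h0
        · left
          exact M3.injOn ⟨hgt, h0⟩ hpmem (by rw [hfx, hfp])
        · exact absurd h0 hne00
        · rcases lt_trichotomy x (1/a) with h1 | h1 | h1
          · exfalso
            have hle : f x ≤ f γ₀ := by
              rcases lt_trichotomy x γ₀ with h2 | h2 | h2
              · exact (M4 ⟨h0, h2.le⟩ ⟨hγ0pos, le_rfl⟩ h2).le
              · exact le_of_eq (by rw [h2])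
              · exact (M5 ⟨le_rfl, hγ0a⟩ ⟨h2.le, h1⟩ h2).le
            linarith
          · exact absurd h1 hne1a
          · right
            exact M6.injOn (mem_Ioi.mpr h1) hqmem (by rw [hfx, hfq])
    · rintro (rfl | rfl)
      · exact ⟨ne_of_gt (by linarith [hpmem.1]), ne_of_gt hpmem.1, ne_of_lt hpmem.2,
          ne_of_lt (by linarith [hpmem.2, ha']), hfp⟩
      · exact ⟨ne_of_gt (by linarith [mem_Ioi.mp hqmem]), ne_of_gt (by linarith [mem_Ioi.mp hqmem]),
          ne_of_gt (by linarith [mem_Ioi.mp hqmem]), ne_of_gt (mem_Ioi.mp hqmem), hfq⟩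
  exact ⟨⟨hx0a, hγ0pos, hγ0a⟩, hderiv_iff, hquadIff, hsecond, hfx0pos,
    p, q, hpmem, hqmem, hset⟩
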